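/- Let p^m ≡ 3 (mod 4), α a nonzero non-square in F_{p^m}, α₀^{p^s} = α, γ^4 = -4α₀. Every ideal of the ring F_{p^m}[x]/⟨x^{4p^s} - α⟩ is of the form ⟨(x²+γx+γ²/2)^i (x²-γx+γ²/2)^j⟩ with 0 ≤ i, j ≤ p^s, and this ideal has p^{m(4p^s-2i-2j)} elements. -/
import Mathlib


open Polynomial

/-- The ambient ring `F_{p^m}[x]/⟨xⁿ - α⟩` of `α`-constacyclic codes over `F_{p^m}`. -/
abbrev AK (K : Type) [Field K] (α : K) (n : ℕ) : Type :=
  K[X] ⧸ Ideal.span {(X : K[X]) ^ n - C α}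

/-- The canonical projection `F_{p^m}[x] → F_{p^m}[x]/⟨xⁿ - α⟩`. -/
noncomputable def mkA (K : Type) [Field K] (α : K) (n : ℕ) : K[X] →+* AK K α n :=
  Ideal.Quotient.mk _

/-- The quadratic `x² + γx + γ²/2` over `F_{p^m}`. -/
noncomputable def qK (K : Type) [Field K] (g : K) : K[X] :=
  X ^ 2 + C g * X + C (g ^ 2 / 2)

section Aux

variable {K : Type} [Field K]

lemma qK_monic (g : K) : (qK K g).Monic := by
  unfold qK; monicity!

lemma qK_natDegree (g : K) : (qK K g).natDegree = 2 := by
  unfold qK; compute_degree!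

lemma qK_irred (h2 : (2 : K) ≠ 0) (hm1 : ¬ IsSquare (-1 : K)) {g : K} (hg : g ≠ 0) :
    Irreducible (qK K g) := by
  rw [irreducible_iff_roots_eq_zero_of_degree_le_three (by rw [qK_natDegree])
    (by rw [qK_natDegree]; norm_num)]
  rw [Multiset.eq_zero_iff_forall_notMem]
  intro r hr
  rw [mem_roots (qK_monic g).ne_zero] at hr
  have hr' : r ^ 2 + g * r + g ^ 2 / 2 = 0 := by
    simpa [qK, IsRoot] using hr
  have hr2 : (r ^ 2 + g * r) * 2 + g ^ 2 = 0 := by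
    field_simp at hr'
    linear_combination hr'
  apply hm1
  refine ⟨(2 * r + g) / g, ?_⟩
  field_simp
  linear_combination (-2 : K) * hr2

lemma card_quot [Fintype K] {h : K[X]} (hh : h ≠ 0) :
    Nat.card (K[X] ⧸ Ideal.span {h}) = Fintype.card K ^ h.natDegree := by
  have e : Nat.card (AdjoinRoot h) = Fintype.card K ^ h.natDegree := by
    let pb := AdjoinRoot.powerBasis hh
    have hdim : pb.dim = h.natDegree := rfl
    rw [Nat.card_congr pb.basis.equivFun.toEquiv, Nat.card_fun]
    simp [Nat.card_eq_fintype_card, hdim]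
  exact e

lemma card_span_mk [Fintype K] {f g h : K[X]} (hf : f = g * h) (hg : g ≠ 0) (hh : h ≠ 0) :
    Nat.card (Ideal.span {Ideal.Quotient.mk (Ideal.span {f}) g} :
        Ideal (K[X] ⧸ Ideal.span {f})) = Fintype.card K ^ h.natDegree := by
  set I : Ideal K[X] := Ideal.span {f} with hI
  let R := K[X] ⧸ I
  let Φ : K[X] →ₗ[K[X]] R := LinearMap.toSpanSingleton K[X] R (Ideal.Quotient.mk I g)
  have hΦ : ∀ u : K[X], Φ u = Ideal.Quotient.mk I (u * g) := by
    intro u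
    show u • (Ideal.Quotient.mk I g) = _
    rfl
  have hker : LinearMap.ker Φ = Ideal.span {h} := by
    ext u
    rw [LinearMap.mem_ker, hΦ, Ideal.Quotient.eq_zero_iff_mem,
      Ideal.mem_span_singleton, Ideal.mem_span_singleton]
    constructor
    · rintro ⟨v, hv⟩
      refine ⟨v, mul_right_cancel₀ hg ?_⟩
      rw [hv, hf]; ring
    · rintro ⟨v, rfl⟩
      exact ⟨v, by rw [hf]; ring⟩
  have hset : ((Ideal.span {Ideal.Quotient.mk I g} : Ideal R) : Set R)
      = (LinearMap.range Φ : Set R) := by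
    ext r
    simp only [SetLike.mem_coe, Ideal.mem_span_singleton', LinearMap.mem_range, hΦ]
    constructor
    · rintro ⟨a, ha⟩
      obtain ⟨u, rfl⟩ := Ideal.Quotient.mk_surjective a
      exact ⟨u, by rw [map_mul]; exact ha⟩
    · rintro ⟨u, rfl⟩
      exact ⟨Ideal.Quotient.mk I u, (map_mul _ _ _).symm⟩
  calc Nat.card (Ideal.span {Ideal.Quotient.mk I g} : Ideal R)
      = Nat.card (LinearMap.range Φ) := Nat.card_congr (Equiv.setCongr hset)
    _ = Nat.card (K[X] ⧸ LinearMap.ker Φ) :=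
        (Nat.card_congr (LinearMap.quotKerEquivRange Φ).toEquiv).symm
    _ = Fintype.card K ^ h.natDegree := by rw [hker]; exact card_quot hh

lemma span_mk_eq_of_associated {R S : Type*} [CommRing R] [CommRing S] (f : R →+* S)
    {a b : R} (h : Associated a b) : Ideal.span {f a} = Ideal.span {f b} := by
  obtain ⟨u, hu⟩ := h
  rw [← hu, map_mul]
  exact (Ideal.span_singleton_mul_right_unit (f.isUnit_map u.isUnit) _).symm

end Aux

set_option maxHeartbeats 1000000 in
theorem stmt14 (p s m : ℕ) (hp : p.Prime) (hodd : Odd p) (hs : 0 < s) (hm : 0 < m)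
    (K : Type) [Field K] [Fintype K] (hK : Fintype.card K = p ^ m)
    (h3 : p ^ m % 4 = 3) (α : K) (hα : α ≠ 0) (hns : ¬ IsSquare α)
    (α₀ : K) (hα₀ : α₀ ^ p ^ s = α) (γ : K) (hγ : γ ^ 4 = -4 * α₀) :
    (∀ I : Ideal (AK K α (4 * p ^ s)),
      ∃ i j : ℕ, i ≤ p ^ s ∧ j ≤ p ^ s ∧
        I = Ideal.span {mkA K α (4 * p ^ s) (qK K γ ^ i * qK K (-γ) ^ j)}) ∧
    ∀ i j : ℕ, i ≤ p ^ s → j ≤ p ^ s →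
      Nat.card (Ideal.span {mkA K α (4 * p ^ s) (qK K γ ^ i * qK K (-γ) ^ j)} :
          Ideal (AK K α (4 * p ^ s))) =
        p ^ (m * (4 * p ^ s - 2 * i - 2 * j)) := by
  haveI : Fact p.Prime := ⟨hp⟩
  -- the characteristic of `K` is `p`
  haveI hchar : CharP K p := by
    obtain ⟨q, hq⟩ := CharP.exists K
    haveI := hq
    obtain ⟨k, hqprime, hcard⟩ := FiniteField.card K q
    have hpq : p = q := by
      have h1 : p ∣ q ^ (k : ℕ) := by
        rw [← hcard, hK]
        exact dvd_pow_self p hm.ne'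
      exact (Nat.prime_dvd_prime_iff_eq hp hqprime).mp (hp.dvd_of_dvd_pow h1)
    rwa [hpq]
  have h2 : (2 : K) ≠ 0 := by
    rw [show (2 : K) = ((2 : ℕ) : K) by norm_num, Ne, CharP.cast_eq_zero_iff K p]
    intro hd
    have := (Nat.prime_dvd_prime_iff_eq hp Nat.prime_two).mp hd
    rw [this] at hodd
    exact (Nat.not_odd_iff_even).mpr (even_two) hodd
  have hα₀ne : α₀ ≠ 0 := by
    intro h
    apply hα
    rw [← hα₀, h, zero_pow (pow_ne_zero s hp.ne_zero)]
  have hγne : γ ≠ 0 := by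
    intro h
    rw [h] at hγ
    have h4 : (4 : K) ≠ 0 := by
      have h44 : (4 : K) = 2 * 2 := by norm_num
      rw [h44]; exact mul_ne_zero h2 h2
    apply hα₀ne
    have h0 : -4 * α₀ = 0 := by rw [← hγ]; norm_num
    rcases mul_eq_zero.mp h0 with h' | h'
    · exact absurd (neg_eq_zero.mp h') h4
    · exact h'
  have hm1 : ¬ IsSquare (-1 : K) := by
    rw [FiniteField.isSquare_neg_one_iff, hK]
    simp [h3]
  set q₁ : K[X] := qK K γ with hq₁
  set q₂ : K[X] := qK K (-γ) with hq₂
  have hq₁irr : Irreducible q₁ := qK_irred h2 hm1 hγne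
  have hq₂irr : Irreducible q₂ := qK_irred h2 hm1 (neg_ne_zero.mpr hγne)
  -- the product of the two quadratics
  have hqq : q₁ * q₂ = X ^ 4 - C α₀ := by
    have hA : C (γ ^ 2 / 2) + C (γ ^ 2 / 2) - C γ * C γ = 0 := by
      have hx : γ ^ 2 / 2 + γ ^ 2 / 2 - γ * γ = 0 := by field_simp; ring
      rw [← C_add, ← C_mul, ← C_sub, hx, C_0]
    have hB : C (γ ^ 2 / 2) * C (γ ^ 2 / 2) + C α₀ = 0 := by
      have hx : γ ^ 2 / 2 * (γ ^ 2 / 2) + α₀ = 0 := by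
        field_simp
        linear_combination hγ
      rw [← C_mul, ← C_add, hx, C_0]
    rw [hq₁, hq₂]
    unfold qK
    simp only [map_neg, neg_sq]
    linear_combination (X : K[X]) ^ 2 * hA + hB
  -- the factorization of `X^(4p^s) - α`
  have hf : (X : K[X]) ^ (4 * p ^ s) - C α = q₁ ^ p ^ s * q₂ ^ p ^ s := by
    rw [← mul_pow, hqq, sub_pow_char_pow, ← pow_mul, ← C_pow, hα₀, mul_comm 4 (p ^ s)]
  have hq₁ne0 : q₁ ≠ 0 := (qK_monic γ).ne_zero
  have hq₂ne0 : q₂ ≠ 0 := (qK_monic (-γ)).ne_zero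
  have hne : q₁ ≠ q₂ := by
    intro h
    have hco : γ = -γ := by
      have := congrArg (fun P : K[X] => P.coeff 1) h
      simpa [hq₁, hq₂, qK, coeff_one] using this
    have : (2 : K) * γ = 0 := by linear_combination hco
    rcases mul_eq_zero.mp this with h' | h'
    · exact h2 h'
    · exact hγne h'
  have hndvd : ¬ q₁ ∣ q₂ := by
    intro hd
    exact hne (eq_of_monic_of_associated (qK_monic γ) (qK_monic (-γ))
      (hq₁irr.associated_of_dvd hq₂irr hd))
  constructor
  · -- classification of ideals
    intro I
    set J : Ideal K[X] := Ideal.comap (mkA K α (4 * p ^ s)) I with hJ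
    obtain ⟨g, hgJ⟩ := (IsPrincipalIdealRing.principal J).principal
    rw [Ideal.submodule_span_eq] at hgJ
    have hfJ : (X : K[X]) ^ (4 * p ^ s) - C α ∈ J := by
      rw [hJ, Ideal.mem_comap]
      have : mkA K α (4 * p ^ s) ((X : K[X]) ^ (4 * p ^ s) - C α) = 0 :=
        Ideal.Quotient.eq_zero_iff_mem.mpr (Ideal.subset_span rfl)
      rw [this]
      exact I.zero_mem
    have hgdvd : g ∣ q₁ ^ p ^ s * q₂ ^ p ^ s := by
      rw [← hf, ← Ideal.mem_span_singleton, ← hgJ]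
      exact hfJ
    obtain ⟨a, b, ha, hb, hab⟩ := exists_dvd_and_dvd_of_dvd_mul hgdvd
    have hq₁p : Prime q₁ := hq₁irr.prime
    have hq₂p : Prime q₂ := hq₂irr.prime
    obtain ⟨i, hi, hia⟩ := (dvd_prime_pow hq₁p _).mp ha
    obtain ⟨j, hj, hjb⟩ := (dvd_prime_pow hq₂p _).mp hb
    have hassoc : Associated g (q₁ ^ i * q₂ ^ j) := by
      rw [hab]; exact hia.mul_mul hjb
    refine ⟨i, j, hi, hj, ?_⟩
    have hsurj : Function.Surjective (mkA K α (4 * p ^ s)) :=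
      Ideal.Quotient.mk_surjective
    have hIm : I = Ideal.map (mkA K α (4 * p ^ s)) J :=
      (Ideal.map_comap_of_surjective _ hsurj I).symm
    rw [hIm, hgJ, Ideal.map_span, Set.image_singleton]
    exact span_mk_eq_of_associated (mkA K α (4 * p ^ s)) hassoc
  · -- cardinalities
    intro i j hi hj
    have hfactor : (X : K[X]) ^ (4 * p ^ s) - C α
        = (q₁ ^ i * q₂ ^ j) * (q₁ ^ (p ^ s - i) * q₂ ^ (p ^ s - j)) := by
      rw [hf, mul_mul_mul_comm, ← pow_add, ← pow_add,
        Nat.add_sub_cancel' hi, Nat.add_sub_cancel' hj]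
    have hcard := card_span_mk hfactor
      (mul_ne_zero (pow_ne_zero _ hq₁ne0) (pow_ne_zero _ hq₂ne0))
      (mul_ne_zero (pow_ne_zero _ hq₁ne0) (pow_ne_zero _ hq₂ne0))
    have hdeg : (q₁ ^ (p ^ s - i) * q₂ ^ (p ^ s - j)).natDegree
        = 2 * (p ^ s - i) + 2 * (p ^ s - j) := by
      rw [natDegree_mul (pow_ne_zero _ hq₁ne0) (pow_ne_zero _ hq₂ne0),
        natDegree_pow, natDegree_pow, hq₁, hq₂, qK_natDegree, qK_natDegree]
      ring
    have hexp : p ^ (m * (4 * p ^ s - 2 * i - 2 * j))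
        = Fintype.card K ^ (2 * (p ^ s - i) + 2 * (p ^ s - j)) := by
      have harith : 4 * p ^ s - 2 * i - 2 * j = 2 * (p ^ s - i) + 2 * (p ^ s - j) := by
        omega
      rw [hK, harith, ← pow_mul]
    rw [hexp, ← hdeg]
    exact hcard
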